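/- Let g be continuous, increasing, with g = 0 on (-∞,0], g > 0 on (0,∞), satisfying g(z) ≥ c z^(n+l) for 0 < z < z* with 0 < n < 3 + l, l > -1/2. Let r̊ > 0, ẙ > 0, ẙ' < 0, and let y ∈ C¹([r̊,∞)) solve y'(r) = ẙ' r̊²/r² - m(r)/r² with y(r̊) = ẙ, where m(r) = 4π ∫_{r̊}^r s^(2+2l) g(y(s)) ds. Then y has a zero in (r̊, ∞). -/

import Mathlib

open Real MeasureTheory Set Filter

/-! If `y` had no zero it would stay positive. As `ẙ' < 0`, `r² y' ≤ -m(r)` with `m` nondecreasing,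
so `y(s) - m(r)/s` decreases for `s ≥ r`; letting `s → ∞` with `y > 0` gives `m(r) ≤ r y(r)`, and
`y` decreases. Then `g(y(s)) ≥ g(y(r))` on `[r̊, r]` yields `m(r) ≳ g(y(r)) r^(3+2l)`, so
`g(y(r)) r^(2+2l) ≲ y(r) ≤ ẙ` and `y` must drop below `z*`, where `g(y) ≥ c y^(n+l)`. From then on
`y(r)^(n+l-1) ≲ r^(-2-2l)`: for `n + l ≤ 1` this contradicts `y ≤ z*`, and for `n + l > 1` it
contradicts `y(r) ≥ m(r₃)/r` with `m(r₃) > 0`, because `n + l - 1 < 2 + 2l`. -/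

lemma tendsto_mul_rpow_sub_mul_rpow_atTop {K B p q : ℝ} (hK : 0 < K) (hq : 0 ≤ q) (hqp : q < p) :
    Tendsto (fun r : ℝ ↦ K * r ^ p - B * r ^ q) atTop atTop := by
  have hlead : Tendsto (fun r : ℝ ↦ K * r ^ (p - q)) atTop atTop :=
    (tendsto_rpow_atTop (sub_pos.2 hqp)).const_mul_atTop hK
  refine tendsto_atTop_mono' atTop ?_ (tendsto_atTop_add_const_right atTop (-B) hlead)
  filter_upwards [eventually_ge_atTop 1, hlead.eventually_ge_atTop B] with r hr1 hrB
  have hsplit : r ^ p = r ^ q * r ^ (p - q) := by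
    rw [← rpow_add (by linarith)]; ring_nf
  have hrq : 1 ≤ r ^ q := one_le_rpow hr1 hq
  rw [hsplit]
  nlinarith

lemma not_eventually_mul_rpow_sub_le {K A B p q : ℝ} (hK : 0 < K) (hq : 0 ≤ q) (hqp : q < p) :
    ¬ ∀ᶠ r in atTop, K * (r ^ p - A) ≤ B * r ^ q := fun h ↦ by
  obtain ⟨r, hgt, hle⟩ :=
    (((tendsto_mul_rpow_sub_mul_rpow_atTop (B := B) hK hq hqp).eventually_gt_atTop (K * A)).and
      h).exists
  linarith

lemma pos_of_forall_ne_zero {y : ℝ → ℝ} {a : ℝ} (hy : ContinuousOn y (Ici a)) (ha : 0 < y a)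
    (hne : ∀ r, a < r → y r ≠ 0) : ∀ r ∈ Ici a, 0 < y r := by
  intro r hr
  by_contra! hyr
  obtain ⟨R, hR, hyR⟩ := intermediate_value_Icc' hr (hy.mono Icc_subset_Ici_self)
    (show (0 : ℝ) ∈ Icc (y r) (y a) from ⟨hyr, ha.le⟩)
  exact hne R (hR.1.lt_of_ne (by rintro rfl; linarith)) hyR

lemma antitoneOn_sub_div_of_deriv_le {y y' : ℝ → ℝ} {a A : ℝ} (ha : 0 < a)
    (hy : ∀ s ∈ Ici a, HasDerivAt y (y' s) s) (hle : ∀ s ∈ Ici a, y' s ≤ -A / s ^ 2) :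
    AntitoneOn (fun s ↦ y s - A / s) (Ici a) := by
  have hderiv : ∀ s ∈ Ici a, HasDerivAt (fun s ↦ y s - A / s) (y' s + A / s ^ 2) s := by
    intro s hs
    have hs0 : s ≠ 0 := (ha.trans_le hs).ne'
    have hinv : HasDerivAt (fun x ↦ A / x) (-A / s ^ 2) s := by
      simpa [div_eq_mul_inv] using (hasDerivAt_inv hs0).const_mul A
    exact ((hy s hs).sub hinv).congr_deriv (by ring)
  refine antitoneOn_of_hasDerivWithinAt_nonpos (convex_Ici a)
    (fun s hs ↦ (hderiv s hs).continuousAt.continuousWithinAt)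
    (fun s hs ↦ (hderiv s (interior_subset hs)).hasDerivWithinAt) fun s hs ↦ ?_
  have := hle s (interior_subset hs)
  rw [neg_div] at this
  linarith

lemma le_mul_of_deriv_le_neg_div_sq {y y' : ℝ → ℝ} {a A : ℝ} (ha : 0 < a)
    (hy : ∀ s ∈ Ici a, HasDerivAt y (y' s) s) (hle : ∀ s ∈ Ici a, y' s ≤ -A / s ^ 2)
    (hnn : ∀ s ∈ Ici a, 0 ≤ y s) : A ≤ a * y a := by
  have hanti := antitoneOn_sub_div_of_deriv_le ha hy hle
  have hlim : Tendsto (fun s : ℝ ↦ -A / s) atTop (nhds 0) :=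
    tendsto_const_nhds.div_atTop tendsto_id
  have : 0 ≤ y a - A / a := by
    refine le_of_tendsto hlim ?_
    filter_upwards [eventually_ge_atTop a] with s hs
    have hmono : y s - A / s ≤ y a - A / a := hanti self_mem_Ici hs hs
    rw [neg_div]
    linarith [hnn s hs]
  rw [sub_nonneg, div_le_iff₀ ha] at this
  linarith

section
variable {y y' M : ℝ → ℝ} {a : ℝ}

lemma antitoneOn_of_deriv_le_neg_div_sq (hy : ∀ s ∈ Ici a, HasDerivAt y (y' s) s)
    (hle : ∀ s ∈ Ici a, y' s ≤ -M s / s ^ 2) (hM : ∀ s ∈ Ici a, 0 ≤ M s) :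
    AntitoneOn y (Ici a) :=
  antitoneOn_of_hasDerivWithinAt_nonpos (convex_Ici a)
    (fun s hs ↦ (hy s hs).continuousAt.continuousWithinAt)
    (fun s hs ↦ (hy s (interior_subset hs)).hasDerivWithinAt) fun s hs ↦
      (hle s (interior_subset hs)).trans
        (div_nonpos_of_nonpos_of_nonneg (neg_nonpos.2 (hM s (interior_subset hs))) (sq_nonneg s))

lemma le_mul_of_deriv_le_neg_div_sq_of_monotoneOn (ha : 0 < a)
    (hy : ∀ s ∈ Ici a, HasDerivAt y (y' s) s) (hM : MonotoneOn M (Ici a))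
    (hle : ∀ s ∈ Ici a, y' s ≤ -M s / s ^ 2) (hnn : ∀ s ∈ Ici a, 0 ≤ y s) (r : ℝ)
    (hr : r ∈ Ici a) : M r ≤ r * y r := by
  have hsub : Ici r ⊆ Ici a := Ici_subset_Ici.2 hr
  refine le_mul_of_deriv_le_neg_div_sq (ha.trans_le hr) (fun s hs ↦ hy s (hsub hs))
    (fun s hs ↦ ?_) fun s hs ↦ hnn s (hsub hs)
  exact (hle s (hsub hs)).trans
    (div_le_div_of_nonneg_right (neg_le_neg (hM hr (hsub hs) hs)) (sq_nonneg s))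

end

noncomputable def mass (k : ℝ) (h : ℝ → ℝ) (a r : ℝ) : ℝ :=
  4 * π * ∫ s in a..r, s ^ k * h s

lemma mul_rpow_sub_le_mass_sub {k G a r₁ r : ℝ} {h : ℝ → ℝ} (ha : 0 < a) (hk : k ≠ -1)
    (h₁ : a ≤ r₁) (h₂ : r₁ ≤ r) (hh : ContinuousOn h (Ici a)) (hG : ∀ s ∈ Icc r₁ r, G ≤ h s) :
    4 * π / (k + 1) * G * (r ^ (k + 1) - r₁ ^ (k + 1)) ≤ mass k h a r - mass k h a r₁ := by
  have hpos : ∀ s ∈ Ici a, 0 < s := fun s hs ↦ ha.trans_le hs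
  have hrpow : ContinuousOn (fun s : ℝ ↦ s ^ k) (Ici a) :=
    continuousOn_id.rpow_const fun s hs ↦ Or.inl (hpos s hs).ne'
  have hint : ∀ b c, a ≤ b → a ≤ c → IntervalIntegrable (fun s ↦ s ^ k * h s) volume b c :=
    fun b c hb hc ↦ ((hrpow.mul hh).mono fun s hs ↦ (le_min hb hc).trans hs.1).intervalIntegrable
  have hsub : Icc r₁ r ⊆ Ici a := fun s hs ↦ h₁.trans hs.1
  have hpow : ∫ s in r₁..r, G * s ^ k = G * ((r ^ (k + 1) - r₁ ^ (k + 1)) / (k + 1)) := by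
    rw [intervalIntegral.integral_const_mul, integral_rpow (Or.inr ⟨hk, fun h0 ↦ ?_⟩)]
    rw [uIcc_of_le h₂] at h0
    exact (hpos 0 (hsub h0)).false
  have hmono : ∫ s in r₁..r, G * s ^ k ≤ ∫ s in r₁..r, s ^ k * h s := by
    refine intervalIntegral.integral_mono_on h₂
      (((hrpow.mono hsub).const_smul G).intervalIntegrable_of_Icc h₂)
      (hint r₁ r h₁ (h₁.trans h₂)) fun s hs ↦ ?_
    rw [mul_comm]
    exact mul_le_mul_of_nonneg_left (hG s hs) (rpow_nonneg (hpos s (hsub hs)).le k)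
  rw [mass, mass, ← mul_sub, intervalIntegral.integral_interval_sub_left
    (hint a r le_rfl (h₁.trans h₂)) (hint a r₁ le_rfl h₁)]
  calc 4 * π / (k + 1) * G * (r ^ (k + 1) - r₁ ^ (k + 1))
      = 4 * π * ∫ s in r₁..r, G * s ^ k := by rw [hpow]; ring
    _ ≤ 4 * π * ∫ s in r₁..r, s ^ k * h s := by gcongr

lemma monotoneOn_mass {k a : ℝ} {h : ℝ → ℝ} (ha : 0 < a) (hk : k ≠ -1)
    (hh : ContinuousOn h (Ici a)) (h0 : ∀ s ∈ Ici a, 0 ≤ h s) :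
    MonotoneOn (mass k h a) (Ici a) := fun r₁ h₁ _ _ h₂ ↦ by
  simpa using mul_rpow_sub_le_mass_sub (G := 0) ha hk h₁ h₂ hh fun s hs ↦ h0 s (h₁.trans hs.1)

section
variable {g y : ℝ → ℝ} {K a p r₀ zstar : ℝ}

lemma exists_lt_of_mul_rpow_sub_le (hK : 0 < K) (ha : 1 < a) (hzs : 0 < zstar)
    (hgmono : Monotone g) (hgpos : ∀ z > 0, 0 < g z) (hr₀ : 0 ≤ r₀) (hyanti : AntitoneOn y (Ici r₀))
    (hstar : ∀ r ∈ Ici r₀, K * g (y r) * (r ^ a - r₀ ^ a) ≤ r * y r) :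
    ∃ r ∈ Ici r₀, y r < zstar := by
  by_contra! hge
  refine not_eventually_mul_rpow_sub_le (A := r₀ ^ a) (B := y r₀) (q := 1)
    (mul_pos hK (hgpos zstar hzs)) zero_le_one ha ?_
  filter_upwards [eventually_ge_atTop r₀] with r hr
  have hpow : r₀ ^ a ≤ r ^ a := rpow_le_rpow hr₀ hr (by linarith)
  calc K * g zstar * (r ^ a - r₀ ^ a)
      ≤ K * g (y r) * (r ^ a - r₀ ^ a) :=
        mul_le_mul_of_nonneg_right (mul_le_mul_of_nonneg_left (hgmono (hge r hr)) hK.le)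
          (sub_nonneg.2 hpow)
    _ ≤ r * y r := hstar r hr
    _ ≤ y r₀ * r ^ (1 : ℝ) := by
      rw [rpow_one, mul_comm]
      exact mul_le_mul_of_nonneg_right (hyanti self_mem_Ici hr hr) (hr₀.trans hr)

lemma false_of_rpow_mul_le_of_le_one {A r₂ : ℝ} (hK : 0 < K) (ha : 1 < a) (hp : p ≤ 1)
    (hy₀ : ∀ r ∈ Ici r₂, 0 < y r) (hyz : ∀ r ∈ Ici r₂, y r ≤ zstar)
    (hbound : ∀ r ∈ Ici r₂, K * y r ^ p * (r ^ a - A) ≤ r * y r) : False := by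
  have hzs : 0 < zstar := (hy₀ r₂ self_mem_Ici).trans_le (hyz r₂ self_mem_Ici)
  refine not_eventually_mul_rpow_sub_le (A := A) (B := 1) (q := 1)
    (mul_pos hK (rpow_pos_of_pos hzs (p - 1))) zero_le_one ha ?_
  filter_upwards [eventually_ge_atTop r₂,
    (tendsto_rpow_atTop (show 0 < a by linarith)).eventually_ge_atTop A] with r hr hA
  have hyr := hy₀ r hr
  have hsplit : y r ^ p = y r ^ (p - 1) * y r := by rw [← rpow_add_one hyr.ne', sub_add_cancel]
  have hpow : zstar ^ (p - 1) ≤ y r ^ (p - 1) := rpow_le_rpow_of_nonpos hyr (hyz r hr) (by linarith)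
  rw [rpow_one, one_mul]
  refine le_of_mul_le_mul_right ?_ hyr
  calc K * zstar ^ (p - 1) * (r ^ a - A) * y r
      ≤ K * y r ^ p * (r ^ a - A) := by
        rw [hsplit]
        linarith [mul_le_mul_of_nonneg_right hpow
          (mul_nonneg (mul_nonneg hK.le (sub_nonneg.2 hA)) hyr.le)]
    _ ≤ r * y r := hbound r hr

lemma false_of_rpow_mul_le_of_one_lt {A m r₂ : ℝ} (hK : 0 < K) (hp : 1 < p) (hpa : p < a)
    (hm : 0 < m) (hy₀ : ∀ r ∈ Ici r₂, 0 < y r) (hmle : ∀ r ∈ Ici r₂, m ≤ r * y r)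
    (hbound : ∀ r ∈ Ici r₂, K * y r ^ p * (r ^ a - A) ≤ r * y r) : False := by
  refine not_eventually_mul_rpow_sub_le (A := A) (B := 1) (q := p)
    (mul_pos hK (rpow_pos_of_pos hm (p - 1))) (by linarith) hpa ?_
  filter_upwards [eventually_ge_atTop r₂,
    (tendsto_rpow_atTop (show 0 < a by linarith)).eventually_ge_atTop A] with r hr hA
  have hyr := hy₀ r hr
  have hr0 : 0 < r := pos_of_mul_pos_left (hm.trans_le (hmle r hr)) hyr.le
  have hpow : m ^ (p - 1) ≤ r ^ (p - 1) * y r ^ (p - 1) := by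
    rw [← mul_rpow hr0.le hyr.le]
    exact rpow_le_rpow hm.le (hmle r hr) (by linarith)
  have hsplit (x : ℝ) (hx : 0 < x) : x ^ p = x ^ (p - 1) * x := by
    rw [← rpow_add_one hx.ne', sub_add_cancel]
  rw [one_mul]
  refine le_of_mul_le_mul_right ?_ hyr
  calc K * m ^ (p - 1) * (r ^ a - A) * y r
      ≤ r ^ (p - 1) * (K * y r ^ p * (r ^ a - A)) := by
        rw [hsplit _ hyr]
        linarith [mul_le_mul_of_nonneg_right hpow
          (mul_nonneg (mul_nonneg hK.le (sub_nonneg.2 hA)) hyr.le)]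
    _ ≤ r ^ (p - 1) * (r * y r) := mul_le_mul_of_nonneg_left (hbound r hr) (rpow_nonneg hr0.le _)
    _ = r ^ p * y r := by rw [hsplit _ hr0]; ring

lemma false_of_mass_bounds {M : ℝ → ℝ} {c : ℝ} (hK : 0 < K) (ha : 1 < a) (hpa : p < a)
    (hc : 0 < c) (hzs : 0 < zstar) (hgmono : Monotone g) (hgpos : ∀ z > 0, 0 < g z)
    (hgrow : ∀ z : ℝ, 0 < z → z < zstar → c * z ^ p ≤ g z) (hr₀ : 0 ≤ r₀)
    (hypos : ∀ r ∈ Ici r₀, 0 < y r) (hyanti : AntitoneOn y (Ici r₀))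
    (hMmono : MonotoneOn M (Ici r₀))
    (hMlow : ∀ r ∈ Ici r₀, K * g (y r) * (r ^ a - r₀ ^ a) ≤ M r)
    (hMle : ∀ r ∈ Ici r₀, M r ≤ r * y r) : False := by
  have hstar (r) (hr : r ∈ Ici r₀) := (hMlow r hr).trans (hMle r hr)
  obtain ⟨r₂, hr₂, hyr₂⟩ :=
    exists_lt_of_mul_rpow_sub_le hK ha hzs hgmono hgpos hr₀ hyanti hstar
  have hsub : Ici r₂ ⊆ Ici r₀ := Ici_subset_Ici.2 hr₂
  have hysmall (r) (hr : r ∈ Ici r₂) : y r < zstar :=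
    (hyanti (hsub self_mem_Ici) (hsub hr) hr).trans_lt hyr₂
  have hbound (r) (hr : r ∈ Ici r₂) : K * c * y r ^ p * (r ^ a - r₀ ^ a) ≤ r * y r := by
    refine le_trans ?_ (hstar r (hsub hr))
    rw [mul_assoc K]
    exact mul_le_mul_of_nonneg_right
      (mul_le_mul_of_nonneg_left (hgrow _ (hypos r (hsub hr)) (hysmall r hr)) hK.le)
      (sub_nonneg.2 (rpow_le_rpow hr₀ (hsub hr) (by linarith)))
  rcases le_or_gt p 1 with hp | hp
  · exact false_of_rpow_mul_le_of_le_one (mul_pos hK hc) ha hp (fun r hr ↦ hypos r (hsub hr))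
      (fun r hr ↦ (hysmall r hr).le) hbound
  · have hr₃ : r₂ + 1 ∈ Ici r₀ := hsub (by simp)
    have hm : 0 < M (r₂ + 1) := by
      refine lt_of_lt_of_le ?_ (hMlow _ hr₃)
      have : r₀ ^ a < (r₂ + 1) ^ a :=
        rpow_lt_rpow hr₀ (by linarith [mem_Ici.1 hr₂]) (by linarith)
      exact mul_pos (mul_pos hK (hgpos _ (hypos _ hr₃))) (sub_pos.2 this)
    have hsub' : Ici (r₂ + 1) ⊆ Ici r₂ := Ici_subset_Ici.2 (by linarith)
    exact false_of_rpow_mul_le_of_one_lt (mul_pos hK hc) hp hpa hm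
      (fun r hr ↦ hypos r (hsub (hsub' hr)))
      (fun r hr ↦ (hMmono hr₃ (hsub (hsub' hr)) hr).trans (hMle r (hsub (hsub' hr))))
      (fun r hr ↦ hbound r (hsub' hr))

end

theorem stmt19_general (l n c zstar : ℝ) (hl : -1/2 < l) (hn3 : n < 3 + l)
    (hc : 0 < c) (hzs : 0 < zstar)
    (g : ℝ → ℝ) (hgc : Continuous g) (hgmono : Monotone g)
    (hgpos : ∀ z > (0:ℝ), 0 < g z)
    (hgrow : ∀ z : ℝ, 0 < z → z < zstar → c * z ^ (n + l) ≤ g z)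
    (ra ya ya' : ℝ) (hra : 0 < ra) (hya : 0 < ya) (hya' : ya' < 0)
    (y y' : ℝ → ℝ) (hy0 : y ra = ya)
    (hy : ∀ r ∈ Ici ra, HasDerivAt y (y' r) r)
    (heq : ∀ r ≥ ra, y' r = ya' * ra ^ 2 / r ^ 2
        - (4 * π * ∫ s in ra..r, s ^ (2 + 2*l) * g (y s)) / r ^ 2) :
    ∃ R : ℝ, ra < R ∧ y R = 0 := by
  by_contra! hzero
  have hk : 2 + 2 * l ≠ -1 := by linarith
  have hyc : ContinuousOn y (Ici ra) := fun r hr ↦ (hy r hr).continuousAt.continuousWithinAt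
  have hypos := pos_of_forall_ne_zero hyc (hy0 ▸ hya) hzero
  have hgyc : ContinuousOn (g ∘ y) (Ici ra) := hgc.comp_continuousOn hyc
  set M := mass (2 + 2 * l) (g ∘ y) ra
  have hMmono : MonotoneOn M (Ici ra) :=
    monotoneOn_mass hra hk hgyc fun s hs ↦ (hgpos _ (hypos s hs)).le
  have hM0 (r) (hr : r ∈ Ici ra) : 0 ≤ M r := by
    simpa [M, mass] using hMmono self_mem_Ici hr hr
  have hy' (r) (hr : r ∈ Ici ra) : y' r ≤ -M r / r ^ 2 := by
    have hyr : y' r = ya' * ra ^ 2 / r ^ 2 - M r / r ^ 2 := heq r hr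
    have : ya' * ra ^ 2 / r ^ 2 ≤ 0 := div_nonpos_of_nonpos_of_nonneg (by nlinarith) (sq_nonneg r)
    rw [hyr, neg_div]
    linarith
  have hyanti := antitoneOn_of_deriv_le_neg_div_sq hy hy' hM0
  have hMle := le_mul_of_deriv_le_neg_div_sq_of_monotoneOn hra hy hMmono hy' fun s hs ↦
    (hypos s hs).le
  have hMlow (r) (hr : r ∈ Ici ra) :
      4 * π / (2 + 2 * l + 1) * g (y r) * (r ^ (2 + 2 * l + 1) - ra ^ (2 + 2 * l + 1)) ≤ M r := by
    simpa [M, mass] using mul_rpow_sub_le_mass_sub hra hk le_rfl hr hgyc fun s hs ↦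
      hgmono (hyanti hs.1 (hs.1.trans hs.2) hs.2)
  exact false_of_mass_bounds (div_pos (by positivity) (by linarith)) (by linarith) (by linarith)
    hc hzs hgmono hgpos hgrow hra.le hypos hyanti hMmono hMlow hMle

theorem stmt19 (l n c zstar : ℝ) (hl : -1/2 < l) (hn0 : 0 < n) (hn3 : n < 3 + l)
    (hc : 0 < c) (hzs : 0 < zstar)
    (g : ℝ → ℝ) (hgc : Continuous g) (hgmono : Monotone g)
    (hg0 : ∀ z ≤ (0:ℝ), g z = 0) (hgpos : ∀ z > (0:ℝ), 0 < g z)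
    (hgrow : ∀ z : ℝ, 0 < z → z < zstar → c * z ^ (n + l) ≤ g z)
    (ra ya ya' : ℝ) (hra : 0 < ra) (hya : 0 < ya) (hya' : ya' < 0)
    (y y' : ℝ → ℝ) (hy0 : y ra = ya)
    (hy : ∀ r ∈ Ici ra, HasDerivAt y (y' r) r)
    (hy'c : ContinuousOn y' (Ici ra))
    (heq : ∀ r ≥ ra, y' r = ya' * ra ^ 2 / r ^ 2
        - (4 * π * ∫ s in ra..r, s ^ (2 + 2*l) * g (y s)) / r ^ 2) :
    ∃ R : ℝ, ra < R ∧ y R = 0 :=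
  stmt19_general l n c zstar hl hn3 hc hzs g hgc hgmono hgpos hgrow ra ya ya' hra hya hya' y y' hy0
    hy heq
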